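/- For any persistence diagrams D₁, D₂, D₃ and any real number p ≥ 1, the p-Wasserstein distance satisfies the triangle inequality: W_p(D₁, D₃) ≤ W_p(D₁, D₂) + W_p(D₂, D₃). Hence W_p is a pseudometric on the set of persistence diagrams. -/

import Mathlib

open scoped BigOperators

/-- A persistence diagram: a finite multiset of points `(b, d)` in `ℝ²` with `b ≤ d`. -/
def IsPersistenceDiagram (D : Multiset (ℝ × ℝ)) : Prop :=
  ∀ q ∈ D, q.1 ≤ q.2

/-- `M` is a partial matching between the diagrams `D₁` and `D₂`: a (multi)subset of
`D₁ × D₂` in which each point of `D₁` appears in at most one pair and each point of `D₂`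
appears in at most one pair. -/
def IsPartialMatching (D₁ D₂ : Multiset (ℝ × ℝ))
    (M : Multiset ((ℝ × ℝ) × (ℝ × ℝ))) : Prop :=
  M.map Prod.fst ≤ D₁ ∧ M.map Prod.snd ≤ D₂

/-- `‖q₁ - q₂‖_p ^ p` for the `ℓ^p` norm on `ℝ²`. -/
noncomputable def lpCostP (p : ℝ) (q₁ q₂ : ℝ × ℝ) : ℝ :=
  |q₁.1 - q₂.1| ^ p + |q₁.2 - q₂.2| ^ p

/-- Orthogonal projection of a point of `ℝ²` onto the diagonal `Δ = {(x, x) : x ∈ ℝ}`. -/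
noncomputable def diagProj (q : ℝ × ℝ) : ℝ × ℝ :=
  ((q.1 + q.2) / 2, (q.1 + q.2) / 2)

/-- The transportation cost `c_p(M)` of a partial matching `M` between `D₁` and `D₂`:
`( Σ_{(q₁,q₂)∈M} ‖q₁ − q₂‖_p^p + Σ_{q unmatched} ‖q − π(q)‖_p^p )^{1/p}`. -/
noncomputable def transportCost (p : ℝ) (D₁ D₂ : Multiset (ℝ × ℝ))
    (M : Multiset ((ℝ × ℝ) × (ℝ × ℝ))) : ℝ :=
  ((M.map fun q => lpCostP p q.1 q.2).sum
      + ((D₁ - M.map Prod.fst).map fun q => lpCostP p q (diagProj q)).sum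
      + ((D₂ - M.map Prod.snd).map fun q => lpCostP p q (diagProj q)).sum) ^ (1 / p)

/-- The `p`-Wasserstein distance between persistence diagrams:
`W_p(D₁, D₂) = inf_M c_p(M)` over all partial matchings `M` between `D₁` and `D₂`. -/
noncomputable def wassersteinDist (p : ℝ) (D₁ D₂ : Multiset (ℝ × ℝ)) : ℝ :=
  sInf {c : ℝ | ∃ M, IsPartialMatching D₁ D₂ M ∧ c = transportCost p D₁ D₂ M}


/-!
Adjoin the diagonal as an extra point `none`: a partial matching becomes a transport plan in
which every point is paired with a point or with `none`. Plans `D₁ → D₂` and `D₂ → D₃` glue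
along `D₂` into a multiset of triples, whose outer pairs form a plan `D₁ → D₃`. Points of `D₁`
or `D₃` left unmatched are not glued to each other through the diagonal, which is a set rather
than a point; so every triple satisfies the `ℓ^p` triangle inequality (the distance to the
diagonal is attained at the orthogonal projection, hence is `1`-Lipschitz). Minkowski's
inequality over the triples then bounds the cost of the composite plan by the sum of the two
costs.
-/

lemma lpCostP_nonneg (p : ℝ) (q r : ℝ × ℝ) : 0 ≤ lpCostP p q r := by
  unfold lpCostP; positivity

lemma lpCostP_comm (p : ℝ) (q r : ℝ × ℝ) : lpCostP p q r = lpCostP p r q := by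
  simp only [lpCostP, abs_sub_comm]

lemma lpCostP_rpow_le_add {p : ℝ} (hp : 1 ≤ p) (a b c : ℝ × ℝ) :
    lpCostP p a c ^ (1 / p) ≤ lpCostP p a b ^ (1 / p) + lpCostP p b c ^ (1 / p) := by
  have h := Real.Lp_add_le Finset.univ ![a.1 - b.1, a.2 - b.2] ![b.1 - c.1, b.2 - c.2] hp
  simpa [Fin.sum_univ_two, lpCostP] using h

lemma lpCostP_diagProj_le {p : ℝ} (hp : 1 ≤ p) (q : ℝ × ℝ) (x : ℝ) :
    lpCostP p q (diagProj q) ≤ lpCostP p q (x, x) := by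
  set a := |q.1 - x|
  set b := |q.2 - x|
  have hab : |q.1 - q.2| ≤ a + b := by simpa [abs_sub_comm x] using abs_sub_le q.1 x q.2
  have hproj : lpCostP p q (diagProj q) = 2 * (|q.1 - q.2| / 2) ^ p := by
    have h₁ : q.1 - (q.1 + q.2) / 2 = (q.1 - q.2) / 2 := by ring
    have h₂ : q.2 - (q.1 + q.2) / 2 = -((q.1 - q.2) / 2) := by ring
    simp only [lpCostP, diagProj, h₁, h₂, abs_neg, abs_div, abs_two]
    ring
  have hconv := (convexOn_rpow hp).2 (Set.mem_Ici.2 (abs_nonneg (q.1 - x)))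
    (Set.mem_Ici.2 (abs_nonneg (q.2 - x))) (by norm_num : (0 : ℝ) ≤ 1 / 2)
    (by norm_num : (0 : ℝ) ≤ 1 / 2) (by norm_num)
  have hmono : (|q.1 - q.2| / 2) ^ p ≤ ((a + b) / 2) ^ p := by gcongr
  simp only [smul_eq_mul, ← add_div, one_div_mul_eq_div] at hconv
  rw [hproj]
  change _ ≤ a ^ p + b ^ p
  linarith

lemma lpCostP_diagProj_rpow_le {p : ℝ} (hp : 1 ≤ p) (q r : ℝ × ℝ) :
    lpCostP p q (diagProj q) ^ (1 / p) ≤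
      lpCostP p q r ^ (1 / p) + lpCostP p r (diagProj r) ^ (1 / p) :=
  calc lpCostP p q (diagProj q) ^ (1 / p)
      ≤ lpCostP p q (diagProj r) ^ (1 / p) := by
        gcongr
        · exact lpCostP_nonneg p q _
        · exact lpCostP_diagProj_le hp q _
    _ ≤ _ := lpCostP_rpow_le_add hp q r (diagProj r)

theorem Multiset.Lp_add_le_of_nonneg {ι : Type*} {p : ℝ} (hp : 1 ≤ p) (S : Multiset ι)
    {f g : ι → ℝ} (hf : ∀ i, 0 ≤ f i) (hg : ∀ i, 0 ≤ g i) :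
    (S.map fun i => (f i + g i) ^ p).sum ^ (1 / p) ≤
      (S.map fun i => f i ^ p).sum ^ (1 / p) + (S.map fun i => g i ^ p).sum ^ (1 / p) := by
  classical
  have hsum (h : ι → ℝ) : (S.map h).sum = ∑ x ∈ S.toEnumFinset, h x.1 := by
    rw [← Finset.sum_map_val, ← Function.comp_def, ← Multiset.map_map,
      Multiset.map_toEnumFinset_fst]
  simp only [hsum]
  exact Real.Lp_add_le_of_nonneg _ hp (fun x _ => hf x.1) (fun x _ => hg x.1)

theorem Multiset.exists_map_eq_of_map_snd_eq_map_fst {α β γ : Type*} (A : Multiset (α × β))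
    (B : Multiset (β × γ)) (h : A.map Prod.snd = B.map Prod.fst) :
    ∃ S : Multiset (α × β × γ), S.map (fun s => (s.1, s.2.1)) = A ∧ S.map Prod.snd = B := by
  classical
  induction A using Multiset.induction_on generalizing B with
  | empty => exact ⟨0, rfl, by simpa [eq_comm] using h⟩
  | cons a A ih =>
    obtain ⟨b, hb, hba⟩ : ∃ b ∈ B, b.1 = a.2 :=
      Multiset.mem_map.1 (h ▸ Multiset.mem_map_of_mem Prod.snd (Multiset.mem_cons_self a A))
    rw [← Multiset.cons_erase hb, Multiset.map_cons, Multiset.map_cons, hba,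
      Multiset.cons_inj_right] at h
    obtain ⟨S, hSA, hSB⟩ := ih _ h
    refine ⟨(a.1, b) ::ₘ S, ?_, ?_⟩
    · simp [hSA, hba]
    · simp [hSB, Multiset.cons_erase hb]

@[simp]
lemma Multiset.filterMap_const_none {α β : Type*} (s : Multiset α) :
    s.filterMap (fun _ => (none : Option β)) = 0 :=
  Quot.inductionOn s fun l => by simp

section OptionPairs

variable {α β : Type*}

def matchedPair : Option α × Option β → Option (α × β)
  | (some a, some b) => some (a, b)
  | _ => none

def unmatchedFst : Option α × Option β → Option α
  | (some a, none) => some a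
  | _ => none

def unmatchedSnd : Option α × Option β → Option β
  | (none, some b) => some b
  | _ => none

lemma filterMap_fst_eq_add (C : Multiset (Option α × Option β)) :
    C.filterMap Prod.fst = (C.filterMap matchedPair).map Prod.fst + C.filterMap unmatchedFst := by
  induction C using Multiset.induction_on with
  | empty => simp
  | cons c C ih =>
    rcases c with ⟨_ | a, _ | b⟩ <;>
      simp [ih, matchedPair, unmatchedFst, Multiset.filterMap_cons]

lemma filterMap_snd_eq_add (C : Multiset (Option α × Option β)) :
    C.filterMap Prod.snd = (C.filterMap matchedPair).map Prod.snd + C.filterMap unmatchedSnd := by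
  induction C using Multiset.induction_on with
  | empty => simp
  | cons c C ih =>
    rcases c with ⟨_ | a, _ | b⟩ <;>
      simp [ih, matchedPair, unmatchedSnd, Multiset.filterMap_cons]

end OptionPairs

/-- `none` stands for the diagonal. -/
noncomputable def diagCost (p : ℝ) : Option (ℝ × ℝ) → Option (ℝ × ℝ) → ℝ
  | some q, some r => lpCostP p q r
  | some q, none => lpCostP p q (diagProj q)
  | none, some r => lpCostP p r (diagProj r)
  | none, none => 0

noncomputable def planCost (p : ℝ) (C : Multiset (Option (ℝ × ℝ) × Option (ℝ × ℝ))) : ℝ :=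
  (C.map fun c => diagCost p c.1 c.2).sum

/-- A transport plan pairs unmatched points with `none`; pairs `(none, none)` are allowed and
cost nothing. -/
def IsPlan (D₁ D₂ : Multiset (ℝ × ℝ)) (C : Multiset (Option (ℝ × ℝ) × Option (ℝ × ℝ))) :
    Prop :=
  C.filterMap Prod.fst = D₁ ∧ C.filterMap Prod.snd = D₂

noncomputable def toPlan (D₁ D₂ : Multiset (ℝ × ℝ)) (M : Multiset ((ℝ × ℝ) × (ℝ × ℝ))) :
    Multiset (Option (ℝ × ℝ) × Option (ℝ × ℝ)) :=
  M.map (fun m => (some m.1, some m.2)) + (D₁ - M.map Prod.fst).map (fun q => (some q, none))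
    + (D₂ - M.map Prod.snd).map (fun r => (none, some r))

lemma diagCost_nonneg (p : ℝ) (x y : Option (ℝ × ℝ)) : 0 ≤ diagCost p x y := by
  rcases x with _ | q <;> rcases y with _ | r <;> simp only [diagCost, le_refl, lpCostP_nonneg]

lemma planCost_nonneg (p : ℝ) (C : Multiset (Option (ℝ × ℝ) × Option (ℝ × ℝ))) :
    0 ≤ planCost p C :=
  Multiset.sum_nonneg fun _ hc => by
    obtain ⟨c, -, rfl⟩ := Multiset.mem_map.1 hc
    exact diagCost_nonneg p _ _

lemma planCost_eq (p : ℝ) (C : Multiset (Option (ℝ × ℝ) × Option (ℝ × ℝ))) :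
    planCost p C = ((C.filterMap matchedPair).map fun m => lpCostP p m.1 m.2).sum
      + ((C.filterMap unmatchedFst).map fun q => lpCostP p q (diagProj q)).sum
      + ((C.filterMap unmatchedSnd).map fun r => lpCostP p r (diagProj r)).sum := by
  induction C using Multiset.induction_on with
  | empty => simp [planCost]
  | cons c C ih =>
    rw [planCost, Multiset.map_cons, Multiset.sum_cons, ← planCost, ih]
    rcases c with ⟨_ | a, _ | b⟩ <;>
      simp [matchedPair, unmatchedFst, unmatchedSnd, diagCost, Multiset.filterMap_cons] <;>
      ring

lemma transportCost_eq_planCost_toPlan (p : ℝ) (D₁ D₂ : Multiset (ℝ × ℝ))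
    (M : Multiset ((ℝ × ℝ) × (ℝ × ℝ))) :
    transportCost p D₁ D₂ M = planCost p (toPlan D₁ D₂ M) ^ (1 / p) := by
  simp [transportCost, planCost, toPlan, diagCost]

theorem IsPlan.transportCost_filterMap_matchedPair {D₁ D₂ : Multiset (ℝ × ℝ)}
    {C : Multiset (Option (ℝ × ℝ) × Option (ℝ × ℝ))} (hC : IsPlan D₁ D₂ C) (p : ℝ) :
    IsPartialMatching D₁ D₂ (C.filterMap matchedPair) ∧
      transportCost p D₁ D₂ (C.filterMap matchedPair) = planCost p C ^ (1 / p) := by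
  obtain ⟨h₁, h₂⟩ := hC
  rw [filterMap_fst_eq_add] at h₁
  rw [filterMap_snd_eq_add] at h₂
  subst h₁ h₂
  refine ⟨⟨Multiset.le_add_right _ _, Multiset.le_add_right _ _⟩, ?_⟩
  rw [transportCost, planCost_eq, add_tsub_cancel_left, add_tsub_cancel_left]

lemma diagCost_rpow_le_add {p : ℝ} (hp : 1 ≤ p) {x y z : Option (ℝ × ℝ)}
    (h : y = none → x = none ∨ z = none) :
    diagCost p x z ^ (1 / p) ≤ diagCost p x y ^ (1 / p) + diagCost p y z ^ (1 / p) := by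
  have hp0 : 1 / p ≠ 0 := by positivity
  have hnone : diagCost p none none ^ (1 / p) = 0 := Real.zero_rpow hp0
  have hnn (u v : Option (ℝ × ℝ)) : 0 ≤ diagCost p u v ^ (1 / p) :=
    Real.rpow_nonneg (diagCost_nonneg p u v) _
  rcases y with _ | b
  · rcases h rfl with rfl | rfl
    · rw [hnone, zero_add]
    · rw [hnone, add_zero]
  rcases x with _ | a <;> rcases z with _ | c
  · rw [hnone]
    exact add_nonneg (hnn _ _) (hnn _ _)
  · simpa [diagCost, lpCostP_comm p c b, add_comm] using lpCostP_diagProj_rpow_le hp c b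
  · exact lpCostP_diagProj_rpow_le hp a b
  · exact lpCostP_rpow_le_add hp a b c

theorem planCost_outer_rpow_le_add {p : ℝ} (hp : 1 ≤ p)
    (S : Multiset (Option (ℝ × ℝ) × Option (ℝ × ℝ) × Option (ℝ × ℝ)))
    (hS : ∀ s ∈ S, s.2.1 = none → s.1 = none ∨ s.2.2 = none) :
    planCost p (S.map fun s => (s.1, s.2.2)) ^ (1 / p) ≤
      planCost p (S.map fun s => (s.1, s.2.1)) ^ (1 / p) +
        planCost p (S.map Prod.snd) ^ (1 / p) := by
  have hp0 : 0 < p := by positivity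
  set ρ : Option (ℝ × ℝ) → Option (ℝ × ℝ) → ℝ := fun u v => diagCost p u v ^ (1 / p)
  have hρ (u v : Option (ℝ × ℝ)) : ρ u v ^ p = diagCost p u v := by
    simp only [ρ, one_div]
    exact Real.rpow_inv_rpow (diagCost_nonneg p u v) hp0.ne'
  have hρ_nonneg (u v : Option (ℝ × ℝ)) : 0 ≤ ρ u v :=
    Real.rpow_nonneg (diagCost_nonneg p u v) _
  have hle : planCost p (S.map fun s => (s.1, s.2.2)) ≤
      (S.map fun s => (ρ s.1 s.2.1 + ρ s.2.1 s.2.2) ^ p).sum := by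
    simp only [planCost, Multiset.map_map, Function.comp_def]
    refine Multiset.sum_map_le_sum_map _ _ fun s hs => ?_
    rw [← hρ]
    gcongr
    · exact hρ_nonneg _ _
    · exact diagCost_rpow_le_add hp (hS s hs)
  calc planCost p (S.map fun s => (s.1, s.2.2)) ^ (1 / p)
      ≤ (S.map fun s => (ρ s.1 s.2.1 + ρ s.2.1 s.2.2) ^ p).sum ^ (1 / p) := by
        gcongr
        exact planCost_nonneg p _
    _ ≤ _ := by
        convert Multiset.Lp_add_le_of_nonneg hp S (f := fun s => ρ s.1 s.2.1)
          (g := fun s => ρ s.2.1 s.2.2) (fun _ => hρ_nonneg _ _) (fun _ => hρ_nonneg _ _)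
          using 3 <;>
        simp only [planCost, Multiset.map_map, Function.comp_def, hρ]

theorem exists_triple_plan (p : ℝ) {D₁ D₂ D₃ : Multiset (ℝ × ℝ)}
    {M N : Multiset ((ℝ × ℝ) × (ℝ × ℝ))}
    (hM : IsPartialMatching D₁ D₂ M) (hN : IsPartialMatching D₂ D₃ N) :
    ∃ S : Multiset (Option (ℝ × ℝ) × Option (ℝ × ℝ) × Option (ℝ × ℝ)),
      planCost p (S.map fun s => (s.1, s.2.1)) = planCost p (toPlan D₁ D₂ M) ∧
      planCost p (S.map Prod.snd) = planCost p (toPlan D₂ D₃ N) ∧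
      IsPlan D₁ D₃ (S.map fun s => (s.1, s.2.2)) ∧
      ∀ s ∈ S, s.2.1 = none → s.1 = none ∨ s.2.2 = none := by
  set A : Multiset (Option (ℝ × ℝ) × (ℝ × ℝ)) :=
    M.map (fun m => (some m.1, m.2)) + (D₂ - M.map Prod.snd).map (fun y => (none, y))
  set B : Multiset ((ℝ × ℝ) × Option (ℝ × ℝ)) :=
    N.map (fun n => (n.1, some n.2)) + (D₂ - N.map Prod.fst).map (fun y => (y, none))
  obtain ⟨G, hGA, hGB⟩ := Multiset.exists_map_eq_of_map_snd_eq_map_fst A B (by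
    simp only [A, B, Multiset.map_add, Multiset.map_map, Function.comp_def, Multiset.map_id']
    rw [add_tsub_cancel_of_le hM.2, add_tsub_cancel_of_le hN.1])
  refine ⟨G.map (fun g => (g.1, some g.2.1, g.2.2))
    + (D₁ - M.map Prod.fst).map (fun q => (some q, none, none))
    + (D₃ - N.map Prod.snd).map (fun r => (none, none, some r)), ?_, ?_, ?_, ?_⟩
  · have hG : (G.map fun g => diagCost p g.1 (some g.2.1)).sum =
        (A.map fun a => diagCost p a.1 (some a.2)).sum := by
      rw [← hGA, Multiset.map_map]; rfl
    simp only [planCost, toPlan, Multiset.map_add, Multiset.map_map, Function.comp_def,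
      Multiset.sum_add, hG, A]
    simp [diagCost]
    ring
  · have hG : (G.map fun g => diagCost p (some g.2.1) g.2.2).sum =
        (B.map fun b => diagCost p (some b.1) b.2).sum := by
      rw [← hGB, Multiset.map_map]; rfl
    simp only [planCost, toPlan, Multiset.map_add, Multiset.map_map, Function.comp_def,
      Multiset.sum_add, hG, B]
    simp [diagCost]
  · have hG₁ : G.filterMap (·.1) = M.map Prod.fst := by
      have h := congrArg (Multiset.filterMap Prod.fst) hGA
      simp only [A, Multiset.filterMap_map, Multiset.filterMap_add, Function.comp_def,
        Multiset.filterMap_const_none, add_zero] at h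
      rw [h, ← Multiset.filterMap_eq_map]
      rfl
    have hG₃ : G.filterMap (·.2.2) = N.map Prod.snd := by
      have h := congrArg (Multiset.filterMap Prod.snd) hGB
      simp only [B, Multiset.filterMap_map, Multiset.filterMap_add, Function.comp_def,
        Multiset.filterMap_const_none, add_zero] at h
      rw [h, ← Multiset.filterMap_eq_map]
      rfl
    constructor
    · simp [Multiset.filterMap_map, Function.comp_def, hG₁, add_tsub_cancel_of_le hM.1]
    · simp [Multiset.filterMap_map, Function.comp_def, hG₃, add_tsub_cancel_of_le hN.2]
  · simp only [Multiset.mem_add, Multiset.mem_map]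
    rintro s ((⟨g, -, rfl⟩ | ⟨q, -, rfl⟩) | ⟨r, -, rfl⟩) h <;> simp_all

theorem exists_transportCost_le_add {p : ℝ} (hp : 1 ≤ p) {D₁ D₂ D₃ : Multiset (ℝ × ℝ)}
    {M N : Multiset ((ℝ × ℝ) × (ℝ × ℝ))}
    (hM : IsPartialMatching D₁ D₂ M) (hN : IsPartialMatching D₂ D₃ N) :
    ∃ K, IsPartialMatching D₁ D₃ K ∧
      transportCost p D₁ D₃ K ≤ transportCost p D₁ D₂ M + transportCost p D₂ D₃ N := by
  obtain ⟨S, h₁₂, h₂₃, hplan, hS⟩ := exists_triple_plan p hM hN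
  obtain ⟨hK, hcost⟩ := hplan.transportCost_filterMap_matchedPair p
  refine ⟨_, hK, ?_⟩
  rw [hcost, transportCost_eq_planCost_toPlan, transportCost_eq_planCost_toPlan, ← h₁₂, ← h₂₃]
  exact planCost_outer_rpow_le_add hp S hS

theorem wasserstein_triangle_general (p : ℝ) (hp : 1 ≤ p)
    (D₁ D₂ D₃ : Multiset (ℝ × ℝ)) :
    wassersteinDist p D₁ D₃ ≤ wassersteinDist p D₁ D₂ + wassersteinDist p D₂ D₃ := by
  let costs (A B : Multiset (ℝ × ℝ)) : Set ℝ :=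
    {c | ∃ M, IsPartialMatching A B M ∧ c = transportCost p A B M}
  have hne (A B) : (costs A B).Nonempty := ⟨_, 0, ⟨by simp, by simp⟩, rfl⟩
  have hbdd (A B) : BddBelow (costs A B) := ⟨0, by
    rintro _ ⟨M, -, rfl⟩
    rw [transportCost_eq_planCost_toPlan]
    exact Real.rpow_nonneg (planCost_nonneg p _) _⟩
  change sInf (costs D₁ D₃) ≤ sInf (costs D₁ D₂) + sInf (costs D₂ D₃)
  rw [← csInf_add (hne _ _) (hbdd _ _) (hne _ _) (hbdd _ _)]
  refine le_csInf ((hne _ _).add (hne _ _)) ?_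
  rintro _ ⟨_, ⟨M, hM, rfl⟩, _, ⟨N, hN, rfl⟩, rfl⟩
  obtain ⟨K, hK, hle⟩ := exists_transportCost_le_add hp hM hN
  exact (csInf_le (hbdd _ _) ⟨K, hK, rfl⟩).trans hle

/-- The `p`-Wasserstein distance satisfies the triangle inequality
`W_p(D₁, D₃) ≤ W_p(D₁, D₂) + W_p(D₂, D₃)`; hence it is a pseudometric on the set of
persistence diagrams. -/
theorem wasserstein_triangle (p : ℝ) (hp : 1 ≤ p)
    (D₁ D₂ D₃ : Multiset (ℝ × ℝ))
    (h₁ : IsPersistenceDiagram D₁) (h₂ : IsPersistenceDiagram D₂)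
    (h₃ : IsPersistenceDiagram D₃) :
    wassersteinDist p D₁ D₃ ≤ wassersteinDist p D₁ D₂ + wassersteinDist p D₂ D₃ :=
  wasserstein_triangle_general p hp D₁ D₂ D₃
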